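/- arXiv:1007.0563 — 3 statements merged into one kernel-verified Lean document; each statement's English description precedes it below -/
import Mathlib

section
/- Let 𝒢 = (𝒞, ℰ) be a block-tree graph for G with clusters C₁,…,C_l, and consider the junction-tree obtained by taking, for each edge (i,j) ∈ ℰ, the clique Cᵢ ∪ Cⱼ. Then the width of this tree decomposition is at most max_{(i,j)∈ℰ} (|Cᵢ| + |Cⱼ|) − 1. Consequently, the treewidth of G satisfies tw(G) ≤ 2·btw(G) − 1. -/
/-- A tree decomposition of a graph `G`: a tree of bags covering all vertices and edges,
with the running intersection property. -/
structure TreeDecomposition {V : Type*} [DecidableEq V] (G : SimpleGraph V) (ι : Type*) where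
  tree : SimpleGraph ι
  isTree : tree.IsTree
  bag : ι → Finset V
  coversVerts : ∀ v, ∃ t, v ∈ bag t
  coversEdges : ∀ u v, G.Adj u v → ∃ t, u ∈ bag t ∧ v ∈ bag t
  runningInter : ∀ (v : V) (s t : ι) (w : tree.Walk s t), w.IsPath →
    v ∈ bag s → v ∈ bag t → ∀ u ∈ w.support, v ∈ bag u

/-- From a block-tree graph of `G` with clusters `C₁, …, C_l` one obtains a
tree decomposition whose bags are the unions `Cᵢ ∪ Cⱼ` over edges `(i,j)` of the block-tree;
its width is at most `max_{(i,j)} (|Cᵢ| + |Cⱼ|) - 1`, so if every cluster has size at most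
`B` then every bag has size at most `2·B` (width `≤ 2·B - 1`); consequently
`tw(G) ≤ 2·btw(G) - 1`. -/
theorem block_tree_gives_tree_decomposition {V : Type*} [Fintype V] [DecidableEq V]
    (G : SimpleGraph V) {l : ℕ} (hl : 2 ≤ l)
    (C : Fin l → Finset V)
    (hdisj : ∀ i j, i ≠ j → Disjoint (C i) (C j))
    (hcover : ∀ v, ∃ i, v ∈ C i)
    (Q : SimpleGraph (Fin l))
    (hQ : ∀ i j, Q.Adj i j ↔ i ≠ j ∧ ∃ u ∈ C i, ∃ v ∈ C j, G.Adj u v)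
    (hTree : Q.IsTree)
    (B : ℕ) (hB : ∀ i, (C i).card ≤ B) :
    ∃ (ι : Type) (D : TreeDecomposition G ι),
      (∀ t : ι, ∃ i j : Fin l, Q.Adj i j ∧ D.bag t = C i ∪ C j) ∧
      (∀ t : ι, (D.bag t).card ≤ 2 * B) := by
  classical
  -- the unique path between any two vertices of the tree `Q`
  have hex := hTree.existsUnique_path
  set P : ∀ i j : Fin l, Q.Walk i j := fun i j => (hex i j).choose with hPdef
  have hP : ∀ i j, (P i j).IsPath := fun i j => (hex i j).choose_spec.1
  have hPu : ∀ (i j : Fin l) (w : Q.Walk i j), w.IsPath → w = P i j := fun i j w hw =>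
    (hex i j).choose_spec.2 w hw
  -- the root and an auxiliary second vertex
  have h0 : (0 : ℕ) < l := by omega
  have h1 : (1 : ℕ) < l := by omega
  set r : Fin l := ⟨0, h0⟩ with hr
  set s₀ : Fin l := ⟨1, h1⟩ with hs₀
  have hrs : r ≠ s₀ := by simp [hr, hs₀, Fin.ext_iff]
  -- the "parent" function
  set τ : Fin l → Fin l := fun i => if i = r then s₀ else r with hτ
  have hτne : ∀ i, i ≠ τ i := by
    intro i
    by_cases h : i = r <;> simp [hτ, h, hrs]
  set p : Fin l → Fin l := fun i => (P i (τ i)).getVert 1 with hp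
  have hlenpos : ∀ i, 0 < (P i (τ i)).length := by
    intro i
    rcases Nat.eq_zero_or_pos (P i (τ i)).length with h | h
    · exact absurd (SimpleGraph.Walk.eq_of_length_eq_zero h) (hτne i)
    · exact h
  have hadj : ∀ i, Q.Adj i (p i) := by
    intro i
    have := (P i (τ i)).adj_getVert_succ (hlenpos i)
    simpa [hp, SimpleGraph.Walk.getVert_zero] using this
  -- for `i ≠ r`, `p i` is the second vertex on the path to the root
  have hpne : ∀ i, i ≠ r → p i = (P i r).getVert 1 := by
    intro i h
    show (P i (τ i)).getVert 1 = (P i r).getVert 1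
    rw [show τ i = r from if_neg h]
  -- key step lemma
  have stepEq : ∀ i j : Fin l, Q.Adj i j → i ∉ (P j r).support → p i = j := by
    intro i j hij hmem
    have hir : i ≠ r := fun h => hmem (h ▸ (P j r).end_mem_support)
    have hWpath : (SimpleGraph.Walk.cons hij (P j r)).IsPath := (hP j r).cons hmem
    have hW := hPu i r _ hWpath
    rw [hpne i hir, ← hW]
    simp [SimpleGraph.Walk.getVert_cons_succ, SimpleGraph.Walk.getVert_zero]
  -- for each edge, one endpoint is the parent of the other
  have parentOf : ∀ i j : Fin l, Q.Adj i j → p i = j ∨ p j = i := by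
    intro i j hij
    by_contra hcon
    push_neg at hcon
    obtain ⟨h1', h2'⟩ := hcon
    have hmem1 : i ∈ (P j r).support := by
      by_contra h; exact h1' (stepEq i j hij h)
    have hmem2 : j ∈ (P i r).support := by
      by_contra h; exact h2' (stepEq j i hij.symm h)
    have key : ∀ a b : Fin l, a ≠ b → (hab : a ∈ (P b r).support) →
        (P a r).length < (P b r).length := by
      intro a b hab hmem
      have hdrop : ((P b r).dropUntil a hmem).IsPath := (hP b r).dropUntil hmem
      have heq : (P b r).dropUntil a hmem = P a r := hPu a r _ hdrop
      have hspec := (P b r).take_spec hmem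
      have hlen : ((P b r).takeUntil a hmem).length + ((P b r).dropUntil a hmem).length
          = (P b r).length := by
        rw [← SimpleGraph.Walk.length_append, hspec]
      have htake : 0 < ((P b r).takeUntil a hmem).length := by
        rcases Nat.eq_zero_or_pos ((P b r).takeUntil a hmem).length with h | h
        · exact absurd (SimpleGraph.Walk.eq_of_length_eq_zero h) hab.symm
        · exact h
      rw [heq] at hlen
      omega
    have hij' : i ≠ j := hij.ne
    have := key i j hij' hmem1
    have := key j i hij'.symm hmem2
    omega
  -- the tree decomposition
  refine ⟨Fin l, ⟨Q, hTree, fun i => C i ∪ C (p i), ?_, ?_, ?_⟩, ?_, ?_⟩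
  · -- coversVerts
    intro v
    obtain ⟨i, hi⟩ := hcover v
    exact ⟨i, Finset.mem_union_left _ hi⟩
  · -- coversEdges
    intro u v huv
    obtain ⟨i, hi⟩ := hcover u
    obtain ⟨j, hj⟩ := hcover v
    by_cases hij : i = j
    · exact ⟨i, Finset.mem_union_left _ hi, Finset.mem_union_left _ (hij ▸ hj)⟩
    · have hadjij : Q.Adj i j := (hQ i j).2 ⟨hij, u, hi, v, hj, huv⟩
      rcases parentOf i j hadjij with h | h
      · exact ⟨i, Finset.mem_union_left _ hi,
          Finset.mem_union_right _ (h ▸ hj)⟩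
      · exact ⟨j, Finset.mem_union_right _ (h ▸ hi),
          Finset.mem_union_left _ hj⟩
  · -- runningInter
    intro v s t w hw hvs hvt u hu
    obtain ⟨k, hk⟩ := hcover v
    -- membership in a bag characterized by the cluster of v
    have memBag : ∀ i : Fin l, v ∈ C i ∪ C (p i) ↔ (i = k ∨ p i = k) := by
      intro i
      constructor
      · intro h
        rcases Finset.mem_union.1 h with h | h
        · left
          by_contra hne
          exact (Finset.disjoint_left.1 (hdisj i k hne) h) hk
        · right
          by_contra hne
          exact (Finset.disjoint_left.1 (hdisj (p i) k hne) h) hk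
      · rintro (rfl | h)
        · exact Finset.mem_union_left _ hk
        · exact Finset.mem_union_right _ (h ▸ hk)
    rw [memBag] at hvs hvt
    rw [memBag]
    -- show every vertex on the walk is `k` or a child of `k`
    by_cases hst : s = t
    · subst hst
      rw [SimpleGraph.Walk.isPath_iff_eq_nil.1 hw] at hu
      simp only [SimpleGraph.Walk.support_nil, List.mem_cons, List.not_mem_nil, or_false] at hu
      subst hu
      exact hvs
    · have hwu : w = P s t := hPu s t w hw
      rcases hvs with rfl | hs
      · -- s = k
        rcases hvt with rfl | ht
        · exact absurd rfl hst
        · have hadjst : Q.Adj s t := (ht ▸ hadj t).symm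
          have hπ : (SimpleGraph.Walk.cons hadjst SimpleGraph.Walk.nil).IsPath := by
            simp [SimpleGraph.Walk.cons_isPath_iff, hst]
          have : w = SimpleGraph.Walk.cons hadjst SimpleGraph.Walk.nil := by
            rw [hwu, ← hPu s t _ hπ]
          rw [this] at hu
          simp only [SimpleGraph.Walk.support_cons, SimpleGraph.Walk.support_nil,
            List.mem_cons, List.not_mem_nil, or_false] at hu
          rcases hu with rfl | rfl
          · exact Or.inl rfl
          · exact Or.inr ht
      · rcases hvt with rfl | ht
        · -- t = k
          have hadjst : Q.Adj s t := hs ▸ hadj s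
          have hπ : (SimpleGraph.Walk.cons hadjst SimpleGraph.Walk.nil).IsPath := by
            simp [SimpleGraph.Walk.cons_isPath_iff, hst]
          have : w = SimpleGraph.Walk.cons hadjst SimpleGraph.Walk.nil := by
            rw [hwu, ← hPu s t _ hπ]
          rw [this] at hu
          simp only [SimpleGraph.Walk.support_cons, SimpleGraph.Walk.support_nil,
            List.mem_cons, List.not_mem_nil, or_false] at hu
          rcases hu with rfl | rfl
          · exact Or.inr hs
          · exact Or.inl rfl
        · -- s ≠ k, t ≠ k
          have hsk : Q.Adj s k := hs ▸ hadj s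
          have hkt : Q.Adj k t := (ht ▸ hadj t).symm
          have hπ : (SimpleGraph.Walk.cons hsk
              (SimpleGraph.Walk.cons hkt SimpleGraph.Walk.nil)).IsPath := by
            simp [SimpleGraph.Walk.cons_isPath_iff, SimpleGraph.Walk.support_cons,
              SimpleGraph.Walk.support_nil, hst, hkt.ne, hsk.ne]
          have : w = SimpleGraph.Walk.cons hsk
              (SimpleGraph.Walk.cons hkt SimpleGraph.Walk.nil) := by
            rw [hwu, ← hPu s t _ hπ]
          rw [this] at hu
          simp only [SimpleGraph.Walk.support_cons, SimpleGraph.Walk.support_nil,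
            List.mem_cons, List.not_mem_nil, or_false] at hu
          rcases hu with rfl | rfl | rfl
          · exact Or.inr hs
          · exact Or.inl rfl
          · exact Or.inr ht
  · -- bags are unions over edges
    intro t
    exact ⟨t, p t, hadj t, rfl⟩
  · -- bag size bound
    intro t
    calc (C t ∪ C (p t)).card ≤ (C t).card + (C (p t)).card := Finset.card_union_le _ _
    _ ≤ B + B := Nat.add_le_add (hB t) (hB (p t))
    _ = 2 * B := (two_mul B).symm
end

section
/- Let p(x) = (1/Z) ∏_{C ∈ 𝒞} ψ_C(x_C) be a factorization of a positive distribution over cliques 𝒞 of a graph G, and let 𝒢 = ({C₁,…,C_l}, ℰ) be a block-tree graph of G. Then each clique C ∈ 𝒞 is contained in Cᵢ ∪ Cⱼ for some edge (i,j) ∈ ℰ, or within a single cluster; consequently p factorizes as p(x) = (1/Z) ∏_{(i,j)∈ℰ} Ψ_{i,j}(x_{Cᵢ}, x_{Cⱼ}) for suitable functions Ψ_{i,j}. -/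
open Finset

lemma no_triangle' {V} {Q : SimpleGraph V} (h : Q.IsAcyclic) {a b c : V}
    (hab : Q.Adj a b) (hbc : Q.Adj b c) (hca : Q.Adj c a) : False := by
  have hp2 : (SimpleGraph.Walk.cons hca.symm (SimpleGraph.Walk.cons hbc.symm
      (SimpleGraph.Walk.nil : Q.Walk b b))).IsPath := by
    simp [SimpleGraph.Walk.isPath_def, hca.ne', hbc.ne', hab.ne]
  have he := h.path_unique (SimpleGraph.Path.singleton hab) ⟨_, hp2⟩
  have hlen := congrArg (fun q : Q.Path a b => (q : Q.Walk a b).length) he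
  simp [SimpleGraph.Path.singleton] at hlen

/-- Let `p(x) = (1/Z) ∏_{c ∈ 𝒞} ψ_c(x_c)` be a factorization of a positive
distribution over cliques of `G`, and let `(C₁,…,C_l, Q)` be a block-tree graph of `G`.
Then every clique is contained in a single cluster or in `Cᵢ ∪ Cⱼ` for some block-tree
edge `(i,j)`; consequently `p` factorizes as
`p(x) = (1/Z) ∏_{(i,j) ∈ ℰ} Ψ_{i,j}(x_{Cᵢ}, x_{Cⱼ})`. -/
theorem block_tree_factorization {n l : ℕ} {S : Type*} [Fintype S]
    (G : SimpleGraph (Fin n)) (hl : 2 ≤ l)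
    (C : Fin l → Finset (Fin n))
    (hdisj : ∀ i j, i ≠ j → Disjoint (C i) (C j))
    (hcover : ∀ v, ∃ i, v ∈ C i)
    (Q : SimpleGraph (Fin l)) [DecidableRel Q.Adj]
    (hQ : ∀ i j, Q.Adj i j ↔ i ≠ j ∧ ∃ u ∈ C i, ∃ v ∈ C j, G.Adj u v)
    (hTree : Q.IsTree)
    (𝒞 : Finset (Finset (Fin n)))
    (hclique : ∀ c ∈ 𝒞, G.IsClique (c : Set (Fin n)))
    (ψ : Finset (Fin n) → (Fin n → S) → ℝ)
    (hψloc : ∀ c ∈ 𝒞, ∀ x y : Fin n → S, (∀ v ∈ c, x v = y v) → ψ c x = ψ c y)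
    (Z : ℝ) (hZ : Z ≠ 0)
    (p : (Fin n → S) → ℝ)
    (hp : ∀ x, p x = (1 / Z) * ∏ c ∈ 𝒞, ψ c x) :
    (∀ c ∈ 𝒞, (∃ i, c ⊆ C i) ∨ ∃ i j, Q.Adj i j ∧ c ⊆ C i ∪ C j) ∧
    ∃ Ψ : Fin l → Fin l → (Fin n → S) → ℝ,
      (∀ i j, Q.Adj i j → ∀ x y : Fin n → S,
        (∀ v ∈ C i ∪ C j, x v = y v) → Ψ i j x = Ψ i j y) ∧
      (∀ x, p x = (1 / Z) *
        ∏ e ∈ Finset.univ.filter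
            (fun e : Fin l × Fin l => e.1 < e.2 ∧ Q.Adj e.1 e.2),
          Ψ e.1 e.2 x) := by
  haveI : NeZero l := ⟨by omega⟩
  -- Part 1
  have hmain : ∀ c ∈ 𝒞, (∃ i, c ⊆ C i) ∨ ∃ i j, Q.Adj i j ∧ c ⊆ C i ∪ C j := by
    intro c hc
    by_cases hone : ∃ i, c ⊆ C i
    · exact Or.inl hone
    right
    push_neg at hone
    -- c is nonempty
    obtain ⟨v, hv⟩ : c.Nonempty := by
      rcases c.eq_empty_or_nonempty with h | h
      · exact absurd (h ▸ (Finset.empty_subset _)) (hone 0)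
      · exact h
    obtain ⟨i, hvi⟩ := hcover v
    obtain ⟨u, hu, hui⟩ : ∃ u ∈ c, u ∉ C i := by
      by_contra h; push_neg at h; exact hone i h
    obtain ⟨j, huj⟩ := hcover u
    have hij : i ≠ j := fun h => hui (h ▸ huj)
    have hvu : v ≠ u := fun h => hui (h ▸ hvi)
    have hadj : Q.Adj i j := (hQ i j).2 ⟨hij, v, hvi, u, huj, hclique c hc hv hu hvu⟩
    refine ⟨i, j, hadj, fun w hw => ?_⟩
    by_contra hwij
    rw [Finset.mem_union] at hwij
    push_neg at hwij
    obtain ⟨k, hwk⟩ := hcover w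
    have hki : k ≠ i := fun h => hwij.1 (h ▸ hwk)
    have hkj : k ≠ j := fun h => hwij.2 (h ▸ hwk)
    have hwv : w ≠ v := fun h => hwij.1 (h ▸ hvi)
    have hwu : w ≠ u := fun h => hwij.2 (h ▸ huj)
    have hQki : Q.Adj k i := (hQ k i).2 ⟨hki, w, hwk, v, hvi, hclique c hc hw hv hwv⟩
    have hQjk : Q.Adj j k := (hQ j k).2 ⟨(Ne.symm hkj), u, huj, w, hwk, hclique c hc hu hw hwu.symm⟩
    exact no_triangle' hTree.IsAcyclic hadj hQjk hQki
  refine ⟨hmain, ?_⟩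
  -- every vertex of Q has a neighbor
  have hnbr : ∀ i : Fin l, ∃ j, Q.Adj i j := by
    intro i
    obtain ⟨j, hj⟩ : ∃ j : Fin l, j ≠ i := by
      refine ⟨if i = 0 then 1 else 0, ?_⟩
      split
      · rename_i h; subst h; intro h1; have := congrArg Fin.val h1; simp [Nat.mod_eq_of_lt (show 1 < l by omega)] at this
      · rename_i h; exact fun h1 => h h1.symm
    obtain ⟨w⟩ := hTree.isConnected.preconnected i j
    cases w with
    | nil => exact absurd rfl hj.symm
    | cons h _ => exact ⟨_, h⟩
  -- assignment of cliques to ordered edges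
  have hassign : ∀ c ∈ 𝒞, ∃ e : Fin l × Fin l,
      e.1 < e.2 ∧ Q.Adj e.1 e.2 ∧ c ⊆ C e.1 ∪ C e.2 := by
    intro c hc
    have : ∃ i j, Q.Adj i j ∧ c ⊆ C i ∪ C j := by
      rcases hmain c hc with ⟨i, hi⟩ | h
      · obtain ⟨j, hj⟩ := hnbr i
        exact ⟨i, j, hj, hi.trans Finset.subset_union_left⟩
      · exact h
    obtain ⟨i, j, hadj, hsub⟩ := this
    rcases lt_or_gt_of_ne hadj.ne with h | h
    · exact ⟨(i, j), h, hadj, hsub⟩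
    · exact ⟨(j, i), h, hadj.symm, by rwa [Finset.union_comm]⟩
  classical
  let f : Finset (Fin n) → Fin l × Fin l := fun c =>
    if h : ∃ e : Fin l × Fin l, e.1 < e.2 ∧ Q.Adj e.1 e.2 ∧ c ⊆ C e.1 ∪ C e.2
    then h.choose else (0, 0)
  have hf : ∀ c ∈ 𝒞, (f c).1 < (f c).2 ∧ Q.Adj (f c).1 (f c).2 ∧ c ⊆ C (f c).1 ∪ C (f c).2 := by
    intro c hc
    have h := hassign c hc
    simp only [f, dif_pos h]
    exact h.choose_spec
  refine ⟨fun i j x => ∏ c ∈ 𝒞.filter (fun c => f c = (i, j)), ψ c x, ?_, ?_⟩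
  · intro i j hadj x y hxy
    refine Finset.prod_congr rfl fun c hc => ?_
    rw [Finset.mem_filter] at hc
    refine hψloc c hc.1 x y fun v hv => ?_
    have hsub := (hf c hc.1).2.2
    rw [hc.2] at hsub
    exact hxy v (hsub hv)
  · intro x
    rw [hp x]
    congr 1
    have hmaps : ∀ c ∈ 𝒞, f c ∈ Finset.univ.filter
        (fun e : Fin l × Fin l => e.1 < e.2 ∧ Q.Adj e.1 e.2) := by
      intro c hc
      have h := hf c hc
      simp [h.1, h.2.1]
    rw [← Finset.prod_fiberwise_of_maps_to hmaps (fun c => ψ c x)]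
end

section
/- Let J be a symmetric positive definite matrix with unit diagonal and let S = I − J. If the spectral radius of the entrywise absolute value matrix satisfies ρ(|S|) < 1 (walk-summability), then for any matrix splitting J = J_S − K_S where J_S retains the diagonal of J and a subset of off-diagonal entries of J (K_S containing the remaining off-diagonal entries with sign flipped), the iteration matrix J_S⁻¹ K_S has spectral radius less than 1, so the splitting iteration converges. -/
attribute [local instance] Matrix.linftyOpNormedAddCommGroup Matrix.linftyOpNormedRing
  Matrix.linftyOpNormedAlgebra

open Filter Topology Matrix

lemma aux_tendsto_pow_norm {A : Type*} [NormedRing A] [NormedAlgebra ℂ A] [CompleteSpace A]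
    {a : A} (h : spectralRadius ℂ a < 1) :
    Tendsto (fun k : ℕ => ‖a ^ k‖) atTop (𝓝 0) := by
  obtain ⟨r, hρr, hr1⟩ := ENNReal.lt_iff_exists_nnreal_btwn.mp h
  have hge := spectrum.pow_nnnorm_pow_one_div_tendsto_nhds_spectralRadius a
  have hev : ∀ᶠ k : ℕ in atTop, (‖a ^ k‖₊ : ENNReal) ^ (1 / (k:ℝ)) < (r : ENNReal) :=
    hge.eventually_lt_const hρr
  have hr1' : (r : ℝ) < 1 := by exact_mod_cast hr1
  have hbound : ∀ᶠ k : ℕ in atTop, ‖a ^ k‖ ≤ (r : ℝ) ^ k := by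
    filter_upwards [hev, eventually_ge_atTop 1] with k hk hk1
    have hkpos : (0:ℝ) < (k:ℝ) := by exact_mod_cast hk1
    have h2 := ENNReal.rpow_lt_rpow hk hkpos
    rw [← ENNReal.rpow_mul, one_div, inv_mul_cancel₀ (ne_of_gt hkpos), ENNReal.rpow_one,
      ENNReal.rpow_natCast] at h2
    have h3 : ‖a ^ k‖₊ < r ^ k := by
      rw [← ENNReal.coe_pow] at h2
      exact_mod_cast h2
    calc ‖a ^ k‖ = (‖a ^ k‖₊ : ℝ) := rfl
      _ ≤ ((r ^ k : NNReal) : ℝ) := by exact_mod_cast h3.le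
      _ = (r : ℝ) ^ k := by push_cast; ring
  refine squeeze_zero' (.of_forall fun k => norm_nonneg _) hbound ?_
  exact tendsto_pow_atTop_nhds_zero_of_lt_one (by positivity) hr1'

lemma aux_entry_le_norm {m : Type*} [Fintype m] (M : Matrix m m ℂ) (i j : m) :
    ‖M i j‖ ≤ ‖M‖ := by
  have : ‖M i j‖₊ ≤ ‖M‖₊ := by
    rw [Matrix.linfty_opNNNorm_def]
    calc ‖M i j‖₊ ≤ ∑ j', ‖M i j'‖₊ :=
          Finset.single_le_sum (f := fun j' => ‖M i j'‖₊) (fun _ _ => zero_le) (Finset.mem_univ j)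
      _ ≤ _ := Finset.le_sup (f := fun i => ∑ j', ‖M i j'‖₊) (Finset.mem_univ i)
  exact_mod_cast this

lemma aux_vec_zero {n : ℕ} {T : Matrix (Fin n) (Fin n) ℝ}
    (hT : ∀ i j, 0 ≤ T i j)
    (hρ : spectralRadius ℂ (T.map (algebraMap ℝ ℂ)) < 1)
    {w : Fin n → ℝ} (hw : ∀ i, 0 ≤ w i) (hle : ∀ i, w i ≤ (T *ᵥ w) i) :
    w = 0 := by
  have hmono : ∀ x y : Fin n → ℝ, (∀ i, x i ≤ y i) → ∀ i, (T *ᵥ x) i ≤ (T *ᵥ y) i := by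
    intro x y hxy i
    simp only [Matrix.mulVec, dotProduct]
    exact Finset.sum_le_sum fun j _ => mul_le_mul_of_nonneg_left (hxy j) (hT i j)
  have hpow : ∀ k : ℕ, ∀ i, w i ≤ ((T ^ k) *ᵥ w) i := by
    intro k
    induction k with
    | zero => intro i; simp [Matrix.one_mulVec]
    | succ k ih =>
      intro i
      have h1 : (T ^ (k+1)) *ᵥ w = T *ᵥ ((T ^ k) *ᵥ w) := by
        rw [Matrix.mulVec_mulVec, ← pow_succ']
      rw [h1]
      exact (hle i).trans (hmono w _ ih i)
  set Tc := T.map (algebraMap ℝ ℂ) with hTc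
  have hmapc : ∀ k : ℕ, (T ^ k).map (algebraMap ℝ ℂ) = Tc ^ k := by
    intro k
    rw [hTc, ← RingHom.mapMatrix_apply, ← RingHom.mapMatrix_apply, map_pow]
  have hentry : ∀ k : ℕ, ∀ i j, (T ^ k) i j ≤ ‖Tc ^ k‖ := by
    intro k i j
    have h1 : (((T ^ k) i j : ℝ) : ℂ) = (Tc ^ k) i j := by
      rw [← hmapc k]; simp [Matrix.map_apply]
    calc (T ^ k) i j ≤ |(T ^ k) i j| := le_abs_self _
      _ = ‖(((T ^ k) i j : ℝ) : ℂ)‖ := by rw [Complex.norm_real, Real.norm_eq_abs]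
      _ = ‖(Tc ^ k) i j‖ := by rw [h1]
      _ ≤ ‖Tc ^ k‖ := aux_entry_le_norm _ i j
  have hlim : Tendsto (fun k : ℕ => ‖Tc ^ k‖ * ∑ j, w j) atTop (𝓝 0) := by
    simpa using (aux_tendsto_pow_norm hρ).mul_const (∑ j, w j)
  funext i
  have hub : ∀ k : ℕ, w i ≤ ‖Tc ^ k‖ * ∑ j, w j := by
    intro k
    calc w i ≤ ((T ^ k) *ᵥ w) i := hpow k i
      _ = ∑ j, (T ^ k) i j * w j := rfl
      _ ≤ ∑ j, ‖Tc ^ k‖ * w j :=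
        Finset.sum_le_sum fun j _ => mul_le_mul_of_nonneg_right (hentry k i j) (hw j)
      _ = ‖Tc ^ k‖ * ∑ j, w j := by rw [Finset.mul_sum]
  exact le_antisymm (ge_of_tendsto' hlim hub) (hw i)


/-- Walk-summability implies convergence of subgraph splittings.  Let `J` be
symmetric positive definite with unit diagonal, `S = I - J`, and suppose the entrywise
absolute value matrix `|S|` has spectral radius `< 1`.  Then for any matrix splitting
`J = J_S - K_S` in which `J_S` keeps the diagonal of `J` and a subset of the off-diagonal
entries (with `K_S` holding the remaining off-diagonal entries, sign flipped), `J_S` is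
invertible and the iteration matrix `J_S⁻¹ K_S` has spectral radius `< 1`, so the
splitting iteration converges. -/
theorem walk_summable_splitting_converges {n : ℕ}
    (J Js Ks S absS : Matrix (Fin n) (Fin n) ℝ)
    (hJ : J.PosDef) (hdiag : ∀ i, J i i = 1)
    (hS : S = 1 - J)
    (habs : ∀ i j, absS i j = |S i j|)
    (hwalk : spectralRadius ℂ (absS.map (algebraMap ℝ ℂ)) < 1)
    (hsplit : J = Js - Ks)
    (hJsdiag : ∀ i, Js i i = J i i)
    (hKsdiag : ∀ i, Ks i i = 0)
    (hoff : ∀ i j, i ≠ j → (Js i j = J i j ∧ Ks i j = 0) ∨ (Js i j = 0 ∧ Ks i j = -(J i j))) :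
    IsUnit Js ∧ spectralRadius ℂ ((Js⁻¹ * Ks).map (algebraMap ℝ ℂ)) < 1 := by
  classical
  set A := (1 : Matrix (Fin n) (Fin n) ℝ) - Js with hA
  have habs_nonneg : ∀ i j, 0 ≤ absS i j := fun i j => (habs i j) ▸ abs_nonneg _
  have hAbound : ∀ i j, |A i j| + |Ks i j| ≤ absS i j := by
    intro i j
    by_cases hij : i = j
    · subst hij
      have hA0 : A i i = 0 := by
        simp [hA, Matrix.sub_apply, Matrix.one_apply_eq, hJsdiag, hdiag]
      simpa [hA0, hKsdiag] using habs_nonneg i i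
    · have hSij : S i j = -(J i j) := by
        rw [hS]; simp [Matrix.sub_apply, Matrix.one_apply_ne hij]
      have hAij : A i j = -(Js i j) := by
        simp [hA, Matrix.sub_apply, Matrix.one_apply_ne hij]
      rcases hoff i j hij with ⟨h1, h2⟩ | ⟨h1, h2⟩
      · rw [hAij, h1, h2, habs, hSij]; simp
      · rw [hAij, h1, h2, habs, hSij]; simp
  have hAabs : ∀ i j, |A i j| ≤ absS i j := fun i j =>
    le_trans (le_add_of_nonneg_right (abs_nonneg _)) (hAbound i j)
  -- Part 1 : Js is invertible
  have hdet : Js.det ≠ 0 := by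
    intro hdet
    obtain ⟨v, hv0, hv⟩ := Matrix.exists_mulVec_eq_zero_iff.mpr hdet
    have hvA : v = A *ᵥ v := by
      rw [hA, Matrix.sub_mulVec, Matrix.one_mulVec, hv, sub_zero]
    have hle : ∀ i, |v i| ≤ (absS *ᵥ (fun j => |v j|)) i := by
      intro i
      calc |v i| = |∑ j, A i j * v j| := by
            rw [congrFun hvA i]; simp [Matrix.mulVec, dotProduct]
        _ ≤ ∑ j, |A i j * v j| := Finset.abs_sum_le_sum_abs _ _
        _ ≤ ∑ j, absS i j * |v j| := Finset.sum_le_sum fun j _ => by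
            rw [abs_mul]
            exact mul_le_mul_of_nonneg_right (hAabs i j) (abs_nonneg _)
        _ = _ := rfl
    have hw0 := aux_vec_zero habs_nonneg hwalk (fun i => abs_nonneg (v i)) hle
    exact hv0 (funext fun i => abs_eq_zero.mp (congrFun hw0 i))
  refine ⟨(Matrix.isUnit_iff_isUnit_det Js).mpr (isUnit_iff_ne_zero.mpr hdet), ?_⟩
  -- Part 2 : spectral radius of the iteration matrix
  set f := algebraMap ℝ ℂ with hf
  set M := (Js⁻¹ * Ks).map f with hM
  have hfin := Matrix.finite_spectrum (R := ℂ) M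
  have hkey : ∀ μ ∈ spectrum ℂ M, (‖μ‖₊ : ENNReal) < 1 := by
    intro μ hμ
    rw [spectrum.mem_iff] at hμ
    have hdet0 : (algebraMap ℂ (Matrix (Fin n) (Fin n) ℂ) μ - M).det = 0 := by
      by_contra hne
      exact hμ ((Matrix.isUnit_iff_isUnit_det _).mpr (isUnit_iff_ne_zero.mpr hne))
    obtain ⟨v, hv0, hv⟩ := Matrix.exists_mulVec_eq_zero_iff.mpr hdet0
    have hMv : M *ᵥ v = μ • v := by
      rw [Algebra.algebraMap_eq_smul_one, Matrix.sub_mulVec, sub_eq_zero] at hv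
      rw [← hv, Matrix.smul_mulVec, Matrix.one_mulVec]
    have hJsinv : Js * Js⁻¹ = 1 := Matrix.mul_nonsing_inv Js (isUnit_iff_ne_zero.mpr hdet)
    have hmm : Js.map f * M = Ks.map f := by
      show Js.map ⇑f * ((Js⁻¹ * Ks).map ⇑f) = Ks.map ⇑f
      rw [← Matrix.map_mul, ← mul_assoc, hJsinv, one_mul]
    have hKv : (Ks.map f) *ᵥ v = μ • ((Js.map f) *ᵥ v) := by
      have h2 : (Js.map f) *ᵥ (M *ᵥ v) = (Ks.map f) *ᵥ v := by
        rw [Matrix.mulVec_mulVec, hmm]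
      rw [hMv, Matrix.mulVec_smul] at h2
      exact h2.symm
    have hJsmap : Js.map f = 1 - A.map f := by
      ext i j
      simp only [Matrix.map_apply, hA, Matrix.sub_apply, Matrix.one_apply, hf]
      by_cases hij : i = j <;> simp [hij]
    by_contra hge
    push_neg at hge
    have h1le : 1 ≤ ‖μ‖ := by
      have : (1 : ENNReal) ≤ ‖μ‖₊ := by exact_mod_cast hge
      exact_mod_cast this
    have hμpos : 0 < ‖μ‖ := lt_of_lt_of_le one_pos h1le
    -- the vector relation : μ • v = μ • (A v) + Ks v
    have hvec : ∀ i, μ * v i = μ * ((A.map f) *ᵥ v) i + ((Ks.map f) *ᵥ v) i := by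
      intro i
      have h4 : (Js.map f) *ᵥ v = v - (A.map f) *ᵥ v := by
        rw [hJsmap, Matrix.sub_mulVec, Matrix.one_mulVec]
      have h5 := congrFun hKv i
      simp only [Pi.smul_apply, smul_eq_mul, h4, Pi.sub_apply] at h5
      rw [h5]; ring
    have hle : ∀ i, ‖v i‖ ≤ (absS *ᵥ (fun j => ‖v j‖)) i := by
      intro i
      have hAv : ‖((A.map f) *ᵥ v) i‖ ≤ ∑ j, |A i j| * ‖v j‖ := by
        calc ‖((A.map f) *ᵥ v) i‖ = ‖∑ j, (A i j : ℂ) * v j‖ := by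
              simp [Matrix.mulVec, dotProduct, Matrix.map_apply, hf]
          _ ≤ ∑ j, ‖(A i j : ℂ) * v j‖ := norm_sum_le _ _
          _ = ∑ j, |A i j| * ‖v j‖ := by
              simp [norm_mul, Complex.norm_real, Real.norm_eq_abs]
      have hKsv : ‖((Ks.map f) *ᵥ v) i‖ ≤ ∑ j, |Ks i j| * ‖v j‖ := by
        calc ‖((Ks.map f) *ᵥ v) i‖ = ‖∑ j, (Ks i j : ℂ) * v j‖ := by
              simp [Matrix.mulVec, dotProduct, Matrix.map_apply, hf]
          _ ≤ ∑ j, ‖(Ks i j : ℂ) * v j‖ := norm_sum_le _ _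
          _ = ∑ j, |Ks i j| * ‖v j‖ := by
              simp [norm_mul, Complex.norm_real, Real.norm_eq_abs]
      have hmain : ‖μ‖ * ‖v i‖ ≤ ‖μ‖ * (absS *ᵥ (fun j => ‖v j‖)) i := by
        calc ‖μ‖ * ‖v i‖ = ‖μ * v i‖ := (norm_mul _ _).symm
          _ = ‖μ * ((A.map f) *ᵥ v) i + ((Ks.map f) *ᵥ v) i‖ := by rw [hvec i]
          _ ≤ ‖μ‖ * ‖((A.map f) *ᵥ v) i‖ + ‖((Ks.map f) *ᵥ v) i‖ := by
              refine (norm_add_le _ _).trans ?_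
              rw [norm_mul]
          _ ≤ ‖μ‖ * (∑ j, |A i j| * ‖v j‖) + ∑ j, |Ks i j| * ‖v j‖ := by
              gcongr
          _ ≤ ‖μ‖ * (∑ j, |A i j| * ‖v j‖) + ‖μ‖ * ∑ j, |Ks i j| * ‖v j‖ := by
              nlinarith [Finset.sum_nonneg (fun j (_ : j ∈ Finset.univ) =>
                mul_nonneg (abs_nonneg (Ks i j)) (norm_nonneg (v j)))]
          _ = ‖μ‖ * ∑ j, (|A i j| + |Ks i j|) * ‖v j‖ := by
              rw [← mul_add, ← Finset.sum_add_distrib]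
              congr 1
              refine Finset.sum_congr rfl fun j _ => ?_
              ring
          _ ≤ ‖μ‖ * ∑ j, absS i j * ‖v j‖ := by
              gcongr with j
              · exact hAbound i j
          _ = ‖μ‖ * (absS *ᵥ (fun j => ‖v j‖)) i := rfl
      exact le_of_mul_le_mul_left hmain hμpos
    have hw0 := aux_vec_zero habs_nonneg hwalk (fun i => norm_nonneg (v i)) hle
    exact hv0 (funext fun i => norm_eq_zero.mp (congrFun hw0 i))
  -- assemble : finite sup of values < 1
  have hsup : spectralRadius ℂ M ≤ hfin.toFinset.sup (fun μ => (‖μ‖₊ : ENNReal)) := by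
    rw [spectralRadius]
    refine iSup₂_le fun μ hμ => ?_
    exact Finset.le_sup (f := fun μ => (‖μ‖₊ : ENNReal)) (hfin.mem_toFinset.mpr hμ)
  refine lt_of_le_of_lt hsup ?_
  rw [Finset.sup_lt_iff (by norm_num : (⊥ : ENNReal) < 1)]
  intro μ hμ
  exact hkey μ (hfin.mem_toFinset.mp hμ)
end
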